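/- For any Boolean function f and variable x, the set of prime implicants of f equals the union of: (1) terms t ∧ ¬x where t is a prime implicant of f|¬x that is not an implicant of f|x; (2) terms t ∧ x where t is a prime implicant of f|x that is not an implicant of f|¬x; and (3) the prime implicants of the conjunction f|¬x ∧ f|x. -/

import Mathlib

abbrev Term (V : Type*) := V → Option Bool

def Extends {V : Type*} (a : V → Bool) (t : Term V) : Prop :=
  ∀ v b, t v = some b → a v = b

def SubTerm {V : Type*} (s t : Term V) : Prop :=
  ∀ v b, s v = some b → t v = some b

def Implicant {V : Type*} (f : (V → Bool) → Bool) (t : Term V) : Prop :=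
  ∀ a, Extends a t → f a = true

def PrimeImplicant {V : Type*} (f : (V → Bool) → Bool) (t : Term V) : Prop :=
  Implicant f t ∧ ∀ s, SubTerm s t → Implicant f s → s = t

def IP {V : Type*} (f : (V → Bool) → Bool) : Set (Term V) :=
  {t | PrimeImplicant f t}

def Compatible {V : Type*} (t t' : Term V) : Prop :=
  ∀ v b b', t v = some b → t' v = some b' → b = b'

def combine {V : Type*} (t t' : Term V) : Term V :=
  fun v => (t v).orElse (fun _ => t' v)

def maxSet {V : Type*} (S : Set (Term V)) : Set (Term V) :=
  {t ∈ S | ∀ t' ∈ S, SubTerm t' t → t' = t}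

def fAnd {V : Type*} (f g : (V → Bool) → Bool) : (V → Bool) → Bool :=
  fun a => f a && g a

def restrict {V : Type*} [DecidableEq V] (f : (V → Bool) → Bool) (x : V) (b : Bool) :
    (V → Bool) → Bool :=
  fun a => f (Function.update a x b)

def SR {V : Type*} (f : (V → Bool) → Bool) (a : V → Bool) : Set (Term V) :=
  {t | PrimeImplicant f t ∧ Extends a t}

/-!
A prime implicant `u` of `f` either leaves `x` free or fixes it to some `b`. In the first case,
`u` and all its subterms are implicants of `f` iff they are implicants of both restrictions, i.e.
of `f|¬x ∧ f|x`; since that conjunction does not depend on `x`, none of its prime implicants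
mentions `x`, so primality transfers in both directions. In the second case `u = t ∧ x^b` is an
implicant of `f` iff `t` is one of `f|x^b`; minimality of `u` among the subterms keeping the
literal `x^b` is primality of `t` for `f|x^b`, and minimality against `t` itself says exactly
that `t` is not an implicant of `f|x^¬b`.
-/

open Function

section

variable {V : Type*}

section Terms

theorem SubTerm.apply_eq_none {s t : Term V} {x : V} (hst : SubTerm s t) (ht : t x = none) :
    s x = none := by
  cases hs : s x with
  | none => rfl
  | some b => simpa [ht] using hst x b hs

theorem Extends.mono {a : V → Bool} {s t : Term V} (hst : SubTerm s t) (ha : Extends a t) :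
    Extends a s := fun v b hv => ha v b (hst v b hv)

variable [DecidableEq V]

theorem subTerm_update_none (t : Term V) (x : V) : SubTerm (update t x none) t := by
  intro v b hv
  rcases eq_or_ne v x with rfl | hvx
  · simp at hv
  · rwa [update_of_ne hvx] at hv

theorem SubTerm.update {s t : Term V} (hst : SubTerm s t) (x : V) (o : Option Bool) :
    SubTerm (update s x o) (update t x o) := by
  intro v b hv
  rcases eq_or_ne v x with rfl | hvx
  · simpa using hv
  · rw [update_of_ne hvx] at hv ⊢
    exact hst v b hv

theorem update_update_none {t : Term V} {x : V} (ht : t x = none) (o : Option Bool) :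
    update (update t x o) x none = t := by
  rw [update_idem, update_eq_self_iff, ht]

theorem update_none_update_some {u : Term V} {x : V} {b : Bool} (hu : u x = some b) :
    update (update u x none) x (some b) = u := by
  rw [update_idem, update_eq_self_iff, hu]

theorem Extends.update {a : V → Bool} {t : Term V} {x : V} (ha : Extends a t) (ht : t x = none)
    (c : Bool) : Extends (update a x c) t := by
  intro v b hv
  rcases eq_or_ne v x with rfl | hvx
  · simp [ht] at hv
  · rw [update_of_ne hvx]
    exact ha v b hv

theorem subTerm_update_of_apply_eq_none {t : Term V} {x : V} (ht : t x = none) (o : Option Bool) :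
    SubTerm t (update t x o) := by
  intro v b hv
  rcases eq_or_ne v x with rfl | hvx
  · simp [ht] at hv
  · rwa [update_of_ne hvx]

theorem extends_update_some_iff {a : V → Bool} {t : Term V} {x : V} (ht : t x = none) (b : Bool) :
    Extends a (update t x (some b)) ↔ Extends a t ∧ a x = b := by
  refine ⟨fun ha => ⟨ha.mono (subTerm_update_of_apply_eq_none ht _), ha x b (by simp)⟩, ?_⟩
  rintro ⟨ha, rfl⟩ v c hv
  rcases eq_or_ne v x with rfl | hvx
  · simpa using hv
  · rw [update_of_ne hvx] at hv
    exact ha v c hv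

end Terms

section Implicants

variable {f g h : (V → Bool) → Bool} {s t u : Term V}

theorem implicant_fAnd_iff : Implicant (fAnd g h) t ↔ Implicant g t ∧ Implicant h t := by
  simp only [Implicant, fAnd, Bool.and_eq_true, imp_and, forall_and]

theorem primeImplicant_iff_of_implicant_iff {x : V} (hu : u x = none)
    (hfg : ∀ s : Term V, s x = none → (Implicant f s ↔ Implicant g s)) :
    PrimeImplicant f u ↔ PrimeImplicant g u := by
  rw [PrimeImplicant, PrimeImplicant, hfg u hu]
  refine and_congr_right fun _ => forall_congr' fun s => imp_congr_right fun hsu => ?_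
  rw [hfg s (hsu.apply_eq_none hu)]

variable [DecidableEq V] {x : V}

theorem restrict_restrict_self (b c : Bool) : restrict (restrict f x b) x c = restrict f x b := by
  funext a
  simp [restrict]

theorem restrict_fAnd (c : Bool) :
    restrict (fAnd g h) x c = fAnd (restrict g x c) (restrict h x c) :=
  rfl

theorem implicant_restrict_iff (ht : t x = none) (b : Bool) :
    Implicant (restrict f x b) t ↔ Implicant f (update t x (some b)) := by
  constructor
  · intro hf a ha
    obtain ⟨hat, rfl⟩ := (extends_update_some_iff ht _).1 ha
    simpa [restrict] using hf a hat
  · intro hf a ha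
    exact hf _ ((extends_update_some_iff ht b).2 ⟨ha.update ht b, by simp⟩)

theorem implicant_iff_forall_restrict (ht : t x = none) :
    Implicant f t ↔ ∀ b, Implicant (restrict f x b) t := by
  constructor
  · intro hf b a ha
    exact hf _ (ha.update ht b)
  · intro hf a ha
    simpa [restrict] using hf (a x) a ha

theorem PrimeImplicant.apply_eq_none (hg : ∀ c, restrict g x c = g) (ht : PrimeImplicant g t) :
    t x = none := by
  cases htx : t x with
  | none => rfl
  | some c =>
    have hx : update t x none x = none := update_self x none t
    have himp : Implicant g (update t x none) := by
      rw [← hg c, implicant_restrict_iff hx, update_none_update_some htx]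
      exact ht.1
    simpa [htx] using congrFun (ht.2 _ (subTerm_update_none t x) himp) x

end Implicants

section Shannon

variable [DecidableEq V] {f : (V → Bool) → Bool} {x : V} {t u : Term V}

theorem PrimeImplicant.apply_restrict_eq_none {b : Bool} (ht : PrimeImplicant (restrict f x b) t) :
    t x = none :=
  ht.apply_eq_none fun c => restrict_restrict_self b c

theorem PrimeImplicant.apply_fAnd_restrict_eq_none
    (hu : PrimeImplicant (fAnd (restrict f x false) (restrict f x true)) u) : u x = none :=
  hu.apply_eq_none fun c => by rw [restrict_fAnd, restrict_restrict_self, restrict_restrict_self]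

theorem primeImplicant_iff_fAnd_restrict (hu : u x = none) :
    PrimeImplicant f u ↔ PrimeImplicant (fAnd (restrict f x false) (restrict f x true)) u :=
  primeImplicant_iff_of_implicant_iff hu fun _ hs => by
    rw [implicant_fAnd_iff, implicant_iff_forall_restrict hs, Bool.forall_bool]

theorem primeImplicant_update_some_iff (ht : t x = none) (b : Bool) :
    PrimeImplicant f (update t x (some b)) ↔
      PrimeImplicant (restrict f x b) t ∧ ¬ Implicant (restrict f x !b) t := by
  constructor
  · intro hu
    have hfb : Implicant (restrict f x b) t := (implicant_restrict_iff ht b).2 hu.1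
    refine ⟨⟨hfb, fun s hst hs => ?_⟩, fun hfnb => ?_⟩
    · have hsx : s x = none := hst.apply_eq_none ht
      have := hu.2 _ (hst.update x (some b)) ((implicant_restrict_iff hsx b).1 hs)
      rw [← update_update_none hsx (some b), this, update_update_none ht]
    · have hf : Implicant f t :=
        (implicant_iff_forall_restrict ht).2 ((Bool.forall_bool' b).2 ⟨hfb, hfnb⟩)
      have := congrFun (hu.2 t (subTerm_update_of_apply_eq_none ht _) hf) x
      simp [ht] at this
  · rintro ⟨htb, hfnb⟩
    refine ⟨(implicant_restrict_iff ht b).1 htb.1, fun s hsu hs => ?_⟩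
    have hst : SubTerm (update s x none) t := by
      simpa only [update_update_none ht] using hsu.update x none
    cases hsx : s x with
    | none =>
      rw [update_eq_self_iff.2 hsx.symm] at hst
      have hsb := (implicant_iff_forall_restrict hsx).1 hs
      exact absurd (htb.2 s hst (hsb b) ▸ hsb !b) hfnb
    | some c =>
      obtain rfl : b = c := by simpa using hsu x c hsx
      have hs' : Implicant (restrict f x b) (update s x none) := by
        rwa [implicant_restrict_iff (update_self x none s), update_none_update_some hsx]
      rw [← update_none_update_some hsx, htb.2 _ hst hs']

end Shannon

end

/-- Shannon-style decomposition of the set of prime implicants. -/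
theorem stmt3 {V : Type*} [DecidableEq V] (f : (V → Bool) → Bool) (x : V) :
    IP f =
      {u | ∃ t, t ∈ IP (restrict f x false) ∧ ¬ Implicant (restrict f x true) t ∧
            u = Function.update t x (some false)} ∪
      {u | ∃ t, t ∈ IP (restrict f x true) ∧ ¬ Implicant (restrict f x false) t ∧
            u = Function.update t x (some true)} ∪
      IP (fAnd (restrict f x false) (restrict f x true)) := by
  ext u
  constructor
  · intro hu
    cases hux : u x with
    | none => exact Or.inr ((primeImplicant_iff_fAnd_restrict hux).1 hu)
    | some b =>
      rw [← update_none_update_some hux] at hu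
      obtain ⟨htb, hfnb⟩ := (primeImplicant_update_some_iff (update_self x none u) b).1 hu
      have hu_eq := (update_none_update_some hux).symm
      cases b
      · exact Or.inl (Or.inl ⟨_, htb, hfnb, hu_eq⟩)
      · exact Or.inl (Or.inr ⟨_, htb, hfnb, hu_eq⟩)
  · rintro ((⟨t, ht, hfnb, rfl⟩ | ⟨t, ht, hfnb, rfl⟩) | hu)
    · exact (primeImplicant_update_some_iff ht.apply_restrict_eq_none false).2 ⟨ht, hfnb⟩
    · exact (primeImplicant_update_some_iff ht.apply_restrict_eq_none true).2 ⟨ht, hfnb⟩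
    · exact (primeImplicant_iff_fAnd_restrict hu.apply_fAnd_restrict_eq_none).2 hu
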